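/- arXiv:1903.11488 — 6 statements merged into one kernel-verified Lean document; each statement's English description precedes it below -/
import Mathlib

section
/- If C is a residually finite category and X is an object of C, then the automorphism group Aut_C(X) is a residually finite group. -/
open CategoryTheory

/-- A category is residually finite if any two distinct parallel morphisms
can be separated by a functor to a finite category. -/
def ResiduallyFiniteCat (C : Type*) [Category C] : Prop :=
  ∀ {X Y : C} (f g : X ⟶ Y), f ≠ g →
    ∃ (D : Type) (_ : SmallCategory D) (_ : FinCategory D) (F : C ⥤ D),
      F.map f ≠ F.map g

/-- A group is residually finite if distinct elements can be separated by
homomorphisms to finite groups. -/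
def ResiduallyFiniteGroup (G : Type*) [Group G] : Prop :=
  ∀ f g : G, f ≠ g →
    ∃ (D : Type) (_ : Group D) (_ : Fintype D) (φ : G →* D), φ f ≠ φ g

/-- Automorphism groups of objects in a residually finite category are
residually finite groups. -/
theorem residuallyFiniteGroup_aut {C : Type*} [Category C]
    (hC : ResiduallyFiniteCat C) (X : C) :
    ResiduallyFiniteGroup (Aut X) := by
  intro f g hfg
  have hhom : f.hom ≠ g.hom := fun h => hfg (Aut.ext h)
  obtain ⟨D, _, hD, F, hF⟩ := hC f.hom g.hom hhom
  refine ⟨Aut (F.obj X), inferInstance, ?_, F.mapAut X, ?_⟩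
  · exact Fintype.ofInjective (fun a : Aut (F.obj X) => (a.hom, a.inv))
      (fun a b h => Iso.ext (congrArg Prod.fst h))
  · intro h
    exact hF (congrArg Iso.hom h)
end

section
/- A connected groupoid C is residually finite if and only if for some (equivalently, any) object X of C, the automorphism group Aut_C(X) is a residually finite group. -/
open CategoryTheory

/-- A connected groupoid is residually finite iff the automorphism group of
some (equivalently, any) object is a residually finite group. -/
theorem residuallyFinite_connected_groupoid_iff {C : Type*} [Groupoid C]
    (hconn : ∀ X Y : C, Nonempty (X ⟶ Y)) (X : C) :
    ResiduallyFiniteCat C ↔ ResiduallyFiniteGroup (Aut X) := by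
  classical
  constructor
  · intro h f g hfg
    have hhom : f.hom ≠ g.hom := fun e => hfg (Iso.ext e)
    obtain ⟨D, _, _, F, hF⟩ := h f.hom g.hom hhom
    have : DecidableEq (F.obj X ⟶ F.obj X) := Classical.decEq _
    have fin : Fintype (Aut (F.obj X)) :=
      Fintype.ofInjective (fun i : Aut (F.obj X) => (i.hom, i.inv))
        (fun i j hij => Iso.ext (congrArg Prod.fst hij))
    refine ⟨Aut (F.obj X), inferInstance, fin, Functor.mapAut X F, ?_⟩
    intro e
    exact hF (congrArg Iso.hom e)
  · intro h
    intro Y Z f g hfg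
    -- choose morphisms from X to every object
    let σ : ∀ A : C, X ⟶ A := fun A => (hconn X A).some
    -- turn a morphism into an automorphism of X
    let autOf : ∀ {A B : C}, (A ⟶ B) → Aut X := fun {A B} k =>
      (Groupoid.isoEquivHom X X).symm (σ A ≫ k ≫ Groupoid.inv (σ B))
    have autOf_hom : ∀ {A B : C} (k : A ⟶ B),
        (autOf k).hom = σ A ≫ k ≫ Groupoid.inv (σ B) := fun k => rfl
    have hab : autOf f ≠ autOf g := by
      intro e
      apply hfg
      have e' : σ Y ≫ f ≫ Groupoid.inv (σ Z) = σ Y ≫ g ≫ Groupoid.inv (σ Z) :=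
        congrArg Iso.hom e
      have := congrArg (fun t => Groupoid.inv (σ Y) ≫ t ≫ σ Z) e'
      simpa [Category.assoc] using this
    obtain ⟨D, _, _, φ, hφ⟩ := h (autOf f) (autOf g) hab
    letI : Fintype D := ‹Fintype D›
    refine ⟨SingleObj D, inferInstance, inferInstance, ?_, ?_⟩
    · refine
        { obj := fun _ => SingleObj.star D
          map := fun {A B} k => φ (autOf k)
          map_id := ?_
          map_comp := ?_ }
      · intro A
        have hone : (1 : Aut X).hom = 𝟙 X := rfl
        have h1 : autOf (𝟙 A) = 1 := by
          apply Iso.ext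
          simp [autOf_hom, hone]
        change φ (autOf (𝟙 A)) = 1
        rw [h1, map_one]
      · intro A B E k l
        have h2 : autOf (k ≫ l) = autOf l * autOf k := by
          apply Iso.ext
          rw [autOf_hom]
          have hm : (autOf l * autOf k).hom = (autOf k).hom ≫ (autOf l).hom := rfl
          rw [hm, autOf_hom, autOf_hom]
          simp [Category.assoc]
        change φ (autOf (k ≫ l)) = φ (autOf l) * φ (autOf k)
        rw [h2, map_mul]
    · exact hφ
end

section
/- For every quiver X, the free category F_X freely generated by X (the path category of X) is residually finite. -/
open CategoryTheory

/-!
A path is determined by its word of edges, so `Paths V` embeds faithfully into the free monoid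
on the edges, and it suffices to separate two distinct words `u ≠ v` in a finite monoid. Take the
automaton whose states are the suffixes of `u` together with a failure state, and which reads a
letter by removing it from the front of the current suffix (failing if it is not there). Starting
from `u`, the only word that reaches the empty suffix is `u` itself, so `u` and `v` already differ
in the finite transition monoid of this automaton.
-/

universe u

namespace FreeMonoid

theorem of_mul_eq_of_mul_iff {α : Type*} {x y : α} {u v : FreeMonoid α} :
    of x * u = of y * v ↔ x = y ∧ u = v := by
  rw [← toList.injective.eq_iff]
  simp only [toList_mul, toList_of, List.singleton_append, List.cons.injEq,
    toList.injective.eq_iff]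

theorem of_mul_ne_one {α : Type*} (x : α) (u : FreeMonoid α) : of x * u ≠ 1 := fun h =>
  List.cons_ne_nil x u.toList (congrArg toList h)

section SuffixAutomaton

variable {α : Type*} [DecidableEq α] (w : List α)

def dropHead (a : α) : Option {l // l ∈ w.tails} → Option {l // l ∈ w.tails}
  | some ⟨b :: l, h⟩ =>
    if a = b then some ⟨l, (List.mem_tails _ _).2 ((List.suffix_cons b l).trans
      ((List.mem_tails _ _).1 h))⟩
    else none
  | _ => none

theorem dropHead_eq_some {a : α} {s : Option {l // l ∈ w.tails}} {r : {l // l ∈ w.tails}} :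
    dropHead w a s = some r ↔ ∃ t, s = some t ∧ t.1 = a :: r.1 := by
  rcases s with _ | ⟨_ | ⟨b, l⟩, h⟩
  · simp [dropHead]
  · simp [dropHead]
  · by_cases hab : a = b
    · subst hab
      simpa [dropHead, Subtype.ext_iff, eq_comm] using fun _ => (List.mem_tails _ _).1 h
    · simp [dropHead, hab, Ne.symm hab]

def tailsAction : FreeMonoid α →* Function.End (Option {l // l ∈ w.tails}) :=
  lift (dropHead w)

/-- Multiplication in `Function.End` is composition, so the last letter of `u` acts first;
hence the reversal. -/
theorem tailsAction_some_eq_some {u : FreeMonoid α} {t r : {l // l ∈ w.tails}} :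
    tailsAction w u (some t) = some r ↔ t.1 = u.toList.reverse ++ r.1 := by
  induction u using FreeMonoid.inductionOn' generalizing r with
  | one =>
    change some t = some r ↔ _
    simp [Subtype.ext_iff]
  | of_mul a u ih =>
    rw [map_mul]
    change dropHead w a (tailsAction w u (some t)) = some r ↔ _
    rw [dropHead_eq_some]
    simpa [ih] using fun h => (List.suffix_append _ _).trans (h ▸ (List.mem_tails _ _).1 t.2)

end SuffixAutomaton

theorem exists_monoidHom_finite_ne {α : Type u} {u v : FreeMonoid α} (huv : u ≠ v) :
    ∃ (N : Type u) (_ : Monoid N) (_ : Finite N) (φ : FreeMonoid α →* N), φ u ≠ φ v := by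
  classical
  let w := u.toList.reverse
  refine ⟨Function.End (Option {l // l ∈ w.tails}), inferInstance,
    inferInstanceAs (Finite (_ → _)), tailsAction w, fun h => huv ?_⟩
  have hu : tailsAction w u (some ⟨w, (List.mem_tails _ _).2 (List.suffix_refl w)⟩) =
      some ⟨[], (List.mem_tails _ _).2 List.nil_suffix⟩ :=
    (tailsAction_some_eq_some w).2 (List.append_nil _).symm
  rw [h, tailsAction_some_eq_some] at hu
  simpa [w] using hu

end FreeMonoid

namespace ResiduallyFiniteCat

theorem of_faithful {C D : Type*} [Category C] [Category D] (hD : ResiduallyFiniteCat D)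
    (F : C ⥤ D) [F.Faithful] : ResiduallyFiniteCat C := by
  intro _ _ f g hfg
  obtain ⟨E, hE, hfin, G, hG⟩ := hD (F.map f) (F.map g) fun h => hfg (F.map_injective h)
  exact ⟨E, hE, hfin, F ⋙ G, hG⟩

theorem singleObj {M : Type*} [Monoid M]
    (hM : ∀ x y : M, x ≠ y →
      ∃ (N : Type*) (_ : Monoid N) (_ : Finite N) (φ : M →* N), φ x ≠ φ y) :
    ResiduallyFiniteCat (SingleObj M) := by
  intro _ _ x y hxy
  obtain ⟨N, _, _, φ, hφ⟩ := hM x y hxy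
  have : Fintype (Shrink.{0} N) := Fintype.ofFinite _
  refine ⟨SingleObj (Shrink.{0} N), inferInstance, inferInstance,
    SingleObj.mapHom _ _ (Shrink.mulEquiv.symm.toMonoidHom.comp φ), ?_⟩
  exact fun h => hφ (Shrink.mulEquiv.symm.injective h)

end ResiduallyFiniteCat

namespace CategoryTheory.Paths

variable (V : Type*) [Quiver V]

def toFreeMonoid : Paths V ⥤ SingleObj (FreeMonoid (Σ a b : V, a ⟶ b)) :=
  lift
    { obj := fun _ => SingleObj.star _
      map := fun {a b} e => FreeMonoid.of ⟨a, b, e⟩ }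

variable {V}

theorem toFreeMonoid_map_nil (X : V) :
    (toFreeMonoid V).map (Quiver.Path.nil : Quiver.Path X X) = (1 : FreeMonoid _) :=
  rfl

theorem toFreeMonoid_map_cons {X Y Z : V} (p : Quiver.Path X Y) (e : Y ⟶ Z) :
    (toFreeMonoid V).map (p.cons e) =
      (FreeMonoid.of ⟨Y, Z, e⟩ * (toFreeMonoid V).map p : FreeMonoid (Σ a b : V, a ⟶ b)) :=
  rfl

theorem toFreeMonoid_map_injective {X Y : V} (p q : Quiver.Path X Y)
    (h : (toFreeMonoid V).map p = (toFreeMonoid V).map q) : p = q := by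
  induction p with
  | nil =>
    cases q with
    | nil => rfl
    | cons q e =>
      rw [toFreeMonoid_map_nil, toFreeMonoid_map_cons] at h
      exact absurd h.symm (FreeMonoid.of_mul_ne_one _ _)
  | cons p e ih =>
    cases q with
    | nil =>
      rw [toFreeMonoid_map_nil, toFreeMonoid_map_cons] at h
      exact absurd h (FreeMonoid.of_mul_ne_one _ _)
    | cons q e' =>
      rw [toFreeMonoid_map_cons, toFreeMonoid_map_cons, FreeMonoid.of_mul_eq_of_mul_iff] at h
      obtain ⟨he, hpq⟩ := h
      obtain ⟨rfl, he⟩ := Sigma.mk.inj_iff.1 he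
      obtain rfl := eq_of_heq (Sigma.mk.inj_iff.1 (eq_of_heq he)).2
      rw [ih q hpq]

instance : (toFreeMonoid V).Faithful where
  map_injective := toFreeMonoid_map_injective _ _

end CategoryTheory.Paths

/-- The free category (path category) on a quiver is residually finite. -/
theorem residuallyFinite_paths (V : Type*) [Quiver V] :
    ResiduallyFiniteCat (CategoryTheory.Paths V) :=
  ResiduallyFiniteCat.of_faithful
    (ResiduallyFiniteCat.singleObj fun _ _ => FreeMonoid.exists_monoidHom_finite_ne)
    (Paths.toFreeMonoid V)
end

section
/- The category FSet of finite sets (with all functions as morphisms) is not residually finite: for every finite category D and every functor F : FSet → D, F identifies the identity of {1,2,3} with the 3-cycle (1 2 3). -/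
open CategoryTheory

/-!
A functor into a finite category sends a permutation of prime order `p` to an endomorphism
whose order divides `p` but is at most the number of morphisms of the target, so it kills
the `p`-cycle once `p` is large. For `p > 3` the `3`-cycle on `Fin 3` is a retract of the
`p`-cycle on `Fin p` (include `Fin 3` as an initial segment, project back by reduction mod `3`),
so it is killed as well.
-/

theorem MonoidHom.map_eq_one_of_card_lt_orderOf {G M : Type*} [Monoid G] [Monoid M] [Finite M]
    (f : G →* M) {g : G} (hp : (orderOf g).Prime) (hcard : Nat.card M < orderOf g) :
    f g = 1 := by
  rcases hp.eq_one_or_self_of_dvd _ (orderOf_map_dvd f g) with h | h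
  · exact orderOf_eq_one_iff.mp h
  · exact absurd (h ▸ orderOf_le_card) hcard.not_ge

theorem orderOf_finRotate {n : ℕ} (hn : 2 ≤ n) : orderOf (finRotate n) = n := by
  rw [(isCycle_finRotate_of_le hn).orderOf, support_finRotate_of_le hn, Finset.card_univ,
    Fintype.card_fin]

theorem FinCategory.card_hom_le_card_sigma_hom {D : Type} [SmallCategory D] [FinCategory D]
    (X Y : D) : Nat.card (X ⟶ Y) ≤ Nat.card (Σ X Y : D, X ⟶ Y) :=
  Nat.card_le_card_of_injective (fun f => ⟨X, Y, f⟩) fun _ _ h => by simpa using h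

theorem finRotate_eq_mod_comp_finRotate_comp_castLE {m n : ℕ} [NeZero m] (h : m < n) :
    ⇑(finRotate m) = (fun y : Fin n => Fin.ofNat m y) ∘ finRotate n ∘ Fin.castLE h.le := by
  funext x
  ext
  have hx : (x : ℕ) + 1 < n := by omega
  simp only [Function.comp_apply, finRotate_apply, Fin.val_add, Fin.val_ofNat, Fin.val_castLE]
  rw [Fin.val_one', Fin.val_one', Nat.add_mod_mod, Nat.add_mod_mod, Nat.mod_eq_of_lt hx]

namespace FintypeCat

def permToEnd (X : Type*) [Finite X] : Equiv.Perm X →* End (of X) where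
  toFun σ := homMk σ
  map_one' := rfl
  map_mul' _ _ := rfl

theorem map_homMk_finRotate_eq_id_of_prime {D : Type} [SmallCategory D] [FinCategory D]
    (F : FintypeCat.{0} ⥤ D) {p : ℕ} (hp : p.Prime)
    (hcard : Nat.card (Σ X Y : D, X ⟶ Y) < p) :
    F.map (homMk (finRotate p) : of (Fin p) ⟶ of (Fin p)) = 𝟙 _ := by
  have : Finite (End (F.obj (of (Fin p)))) := inferInstanceAs (Finite (_ ⟶ _))
  have hord : orderOf (finRotate p) = p := orderOf_finRotate hp.two_le
  refine ((F.mapEnd _).comp (permToEnd (Fin p))).map_eq_one_of_card_lt_orderOf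
    (hord.symm ▸ hp) ?_
  rw [hord]
  exact (FinCategory.card_hom_le_card_sigma_hom _ _).trans_lt hcard

theorem map_homMk_finRotate_eq_id {D : Type} [SmallCategory D] [FinCategory D]
    (F : FintypeCat.{0} ⥤ D) (m : ℕ) [NeZero m] :
    F.map (homMk (finRotate m) : of (Fin m) ⟶ of (Fin m)) = 𝟙 _ := by
  obtain ⟨p, hp_ge, hp⟩ :=
    Nat.exists_infinite_primes (max (Nat.card (Σ X Y : D, X ⟶ Y)) m + 1)
  let u : of (Fin m) ⟶ of (Fin p) := homMk (Fin.castLE (by omega))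
  let r : of (Fin p) ⟶ of (Fin m) := homMk fun y => Fin.ofNat m y
  have hrot : homMk (finRotate m) = u ≫ homMk (finRotate p) ≫ r := by
    rw [finRotate_eq_mod_comp_finRotate_comp_castLE (by omega : m < p)]
    rfl
  have hid : u ≫ r = 𝟙 _ := hom_ext _ _ Fin.ofNat_val_eq_self
  rw [hrot, F.map_comp, F.map_comp, map_homMk_finRotate_eq_id_of_prime F hp (by omega),
    Category.id_comp, ← F.map_comp, hid, F.map_id]

end FintypeCat

/-- The category of finite sets is not residually finite: every functor to a
finite category identifies the identity of a 3-element set with a 3-cycle. -/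
theorem fintypeCat_not_residuallyFinite :
    (∀ (D : Type) (_ : SmallCategory D) (_ : FinCategory D)
        (F : FintypeCat.{0} ⥤ D),
      F.map (𝟙 (FintypeCat.of (Fin 3))) =
        F.map ((InducedCategory.homEquiv.trans TypeCat.homEquiv).symm (finRotate 3 : Fin 3 → Fin 3) :
          FintypeCat.of (Fin 3) ⟶ FintypeCat.of (Fin 3))) ∧
    ¬ ResiduallyFiniteCat FintypeCat.{0} := by
  have kills : ∀ (D : Type) (_ : SmallCategory D) (_ : FinCategory D)
      (F : FintypeCat.{0} ⥤ D),
      F.map (𝟙 (FintypeCat.of (Fin 3))) = F.map (FintypeCat.homMk (finRotate 3)) :=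
    fun _ _ _ F => (F.map_id _).trans (FintypeCat.map_homMk_finRotate_eq_id F 3).symm
  refine ⟨kills, fun hres => ?_⟩
  have hne : 𝟙 (FintypeCat.of (Fin 3)) ≠ FintypeCat.homMk (finRotate 3) := by
    rw [ne_comm, Ne, FintypeCat.homMk_eq_id_iff]
    decide
  obtain ⟨D, _, _, F, hF⟩ := hres _ _ hne
  exact hF (kills D ‹_› ‹_› F)
end

section
/- The simplex category Δ is not residually finite: for every finite category D and every functor F : Δ → D, F identifies the identity of [1] with the constant map [1] → [1] with value 0. -/
open CategoryTheory

namespace SimplexNotRF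

open SimplexCategory

def qmap (n : ℕ) : SimplexCategory.mk n ⟶ SimplexCategory.mk n :=
  SimplexCategory.mkHom ⟨fun j => ⟨j.val - 1, lt_of_le_of_lt (Nat.sub_le _ _) j.isLt⟩,
    fun _ _ h => Fin.mk_le_mk.mpr (Nat.sub_le_sub_right h 1)⟩

def imap (n : ℕ) : SimplexCategory.mk 1 ⟶ SimplexCategory.mk n :=
  SimplexCategory.mkHom ⟨fun j => ⟨j.val * n,
      Nat.lt_succ_of_le (by simpa using Nat.mul_le_mul_right n (Nat.lt_succ_iff.mp j.isLt))⟩,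
    fun _ _ h => Fin.mk_le_mk.mpr (Nat.mul_le_mul_right n h)⟩

def rmap (n : ℕ) : SimplexCategory.mk n ⟶ SimplexCategory.mk 1 :=
  SimplexCategory.mkHom ⟨fun j => ⟨min j.val 1, Nat.lt_succ_of_le (min_le_right _ _)⟩,
    fun _ _ h => Fin.mk_le_mk.mpr (min_le_min h (le_refl 1))⟩

def qpow (n : ℕ) : ℕ → (SimplexCategory.mk n ⟶ SimplexCategory.mk n)
  | 0 => 𝟙 _
  | m + 1 => qpow n m ≫ qmap n

lemma qpow_add (n a b : ℕ) : qpow n (a + b) = qpow n a ≫ qpow n b := by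
  induction b with
  | zero => simp [qpow]
  | succ b ih => rw [← Nat.add_assoc]; simp [qpow, ih, Category.assoc]

lemma qpow_apply (n m : ℕ) (x : Fin (n + 1)) :
    ((qpow n m).toOrderHom x).val = x.val - m := by
  induction m with
  | zero => simp [qpow, SimplexCategory.id_toOrderHom]
  | succ m ih =>
      have h : ((qpow n (m+1)).toOrderHom x) = (qmap n).toOrderHom ((qpow n m).toOrderHom x) := by
        simp [qpow, SimplexCategory.comp_toOrderHom]
      rw [h]
      have h2 : ((qmap n).toOrderHom ((qpow n m).toOrderHom x)).val
          = ((qpow n m).toOrderHom x).val - 1 := rfl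
      rw [h2, ih]
      omega

lemma squeeze_apply (n m : ℕ) (x : Fin 2) :
    ((imap n ≫ qpow n m ≫ rmap n).toOrderHom x).val = min (x.val * n - m) 1 := by
  have h : ((imap n ≫ qpow n m ≫ rmap n).toOrderHom x)
      = (rmap n).toOrderHom ((qpow n m).toOrderHom ((imap n).toOrderHom x)) := rfl
  rw [h]
  have h2 : ∀ y : Fin (n+1), ((rmap n).toOrderHom y).val = min y.val 1 := fun _ => rfl
  rw [h2, qpow_apply]
  have h3 : ((imap n).toOrderHom x).val = x.val * n := rfl
  rw [h3]

lemma squeeze_id (n m : ℕ) (h1 : 1 ≤ n - m) :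
    imap n ≫ qpow n m ≫ rmap n = 𝟙 (SimplexCategory.mk 1) := by
  apply SimplexCategory.Hom.ext
  ext x
  have h := squeeze_apply n m x
  have hid : ((𝟙 (SimplexCategory.mk 1) : _ ⟶ _).toOrderHom x).val = x.val := rfl
  rw [h, hid]
  have hx : x.val < 2 := x.isLt
  interval_cases hxv : x.val
  · simp
  · simp; omega

lemma squeeze_const (n : ℕ) :
    imap n ≫ qpow n n ≫ rmap n
      = SimplexCategory.const (SimplexCategory.mk 1) (SimplexCategory.mk 1) 0 := by
  apply SimplexCategory.Hom.ext
  ext x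
  have h := squeeze_apply n n x
  have hc : ((SimplexCategory.const (SimplexCategory.mk 1) (SimplexCategory.mk 1) 0).toOrderHom
      x).val = 0 := rfl
  rw [h, hc]
  have hx : x.val < 2 := x.isLt
  interval_cases hxv : x.val
  · simp
  · simp

end SimplexNotRF

open SimplexNotRF

/-- The simplex category is not residually finite: every functor to a finite
category identifies the identity of `[1]` with the constant map `[1] ⟶ [1]`
with value `0`. -/
theorem simplexCategory_not_residuallyFinite :
    (∀ (D : Type) (_ : SmallCategory D) (_ : FinCategory D)
        (F : SimplexCategory ⥤ D),
      F.map (𝟙 (SimplexCategory.mk 1)) =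
        F.map (SimplexCategory.const (SimplexCategory.mk 1) (SimplexCategory.mk 1) 0)) ∧
    ¬ ResiduallyFiniteCat SimplexCategory := by
  have main : ∀ (D : Type) (_ : SmallCategory D) (_ : FinCategory D)
      (F : SimplexCategory ⥤ D),
      F.map (𝟙 (SimplexCategory.mk 1)) =
        F.map (SimplexCategory.const (SimplexCategory.mk 1) (SimplexCategory.mk 1) 0) := by
    intro D _ _ F
    set n := Fintype.card (Σ (X : D) (Y : D), X ⟶ Y) with hn
    -- n ≥ 1
    have hn1 : 1 ≤ n := Fintype.card_pos_iff.mpr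
      ⟨⟨F.obj (SimplexCategory.mk 1), F.obj (SimplexCategory.mk 1), 𝟙 _⟩⟩
    -- pigeonhole on powers of F.map (qmap n)
    have hcard : Fintype.card (F.obj (SimplexCategory.mk n) ⟶ F.obj (SimplexCategory.mk n))
        < n + 1 := by
      have : Fintype.card (F.obj (SimplexCategory.mk n) ⟶ F.obj (SimplexCategory.mk n)) ≤ n := by
        rw [hn]
        exact Fintype.card_le_of_injective
          (fun f => ⟨F.obj (SimplexCategory.mk n), F.obj (SimplexCategory.mk n), f⟩)
          (fun f g h => by
            rw [Sigma.mk.inj_iff] at h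
            have h2 := eq_of_heq h.2
            rw [Sigma.mk.inj_iff] at h2
            exact eq_of_heq h2.2)
      omega
    obtain ⟨a, b, hab, heq⟩ := Fintype.exists_ne_map_eq_of_card_lt
      (fun m : Fin (n + 1) => F.map (qpow n m.val)) (by simpa using hcard)
    -- wlog a < b
    have key : ∃ j k : ℕ, j < k ∧ k ≤ n ∧ F.map (qpow n j) = F.map (qpow n k) := by
      rcases lt_or_gt_of_ne (fun h => hab (Fin.ext h) : a.val ≠ b.val) with h | h
      · exact ⟨a.val, b.val, h, Nat.lt_succ_iff.mp b.isLt, heq⟩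
      · exact ⟨b.val, a.val, h, Nat.lt_succ_iff.mp a.isLt, heq.symm⟩
    obtain ⟨j, k, hjk, hkn, hF⟩ := key
    set d := k - j with hd
    have hd1 : 1 ≤ d := by omega
    -- F.map (qpow n (n - d)) = F.map (qpow n n)
    have hshift : F.map (qpow n (n - d)) = F.map (qpow n n) := by
      have e1 : n - d = j + (n - k) := by omega
      have e2 : n = k + (n - k) := by omega
      rw [e1, qpow_add, F.map_comp, hF, ← F.map_comp, ← qpow_add, ← e2]
    have hid : 𝟙 (SimplexCategory.mk 1) = imap n ≫ qpow n (n - d) ≫ rmap n :=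
      (squeeze_id n (n - d) (by omega)).symm
    calc F.map (𝟙 (SimplexCategory.mk 1))
        = F.map (imap n) ≫ F.map (qpow n (n - d)) ≫ F.map (rmap n) := by
          rw [hid]; simp [F.map_comp]
      _ = F.map (imap n) ≫ F.map (qpow n n) ≫ F.map (rmap n) := by rw [hshift]
      _ = F.map (imap n ≫ qpow n n ≫ rmap n) := by simp [F.map_comp]
      _ = F.map (SimplexCategory.const (SimplexCategory.mk 1) (SimplexCategory.mk 1) 0) := by
          rw [squeeze_const]
  refine ⟨main, ?_⟩
  intro hRF
  have hne : (𝟙 (SimplexCategory.mk 1)) ≠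
      SimplexCategory.const (SimplexCategory.mk 1) (SimplexCategory.mk 1) 0 := by
    intro h
    have := congrArg (fun f => ((SimplexCategory.Hom.toOrderHom f) 1).val) h
    simp only [SimplexCategory.id_toOrderHom] at this
    exact absurd this (by decide)
  obtain ⟨D, iD, fD, F, hFne⟩ := hRF _ _ hne
  exact hFne (main D iD fD F)
end

section
/- For every ring R with unit (1 ≠ 0), the category of finitely generated free left R-modules and R-linear maps is not residually finite. -/
/-!
Finite sets embed contravariantly into `FreeModCat R` by sending `u : Fin a → Fin b` to
precomposition `R^b → R^a` with `u`. A functor `F` to a finite category has boundedly many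
morphisms between any two objects, so for `m` large it identifies two of the coordinate
projections `R^m → R`, say those at `i ≠ j`. Precomposing with the map `R^2 → R^m` induced by a
function `Fin m → Fin 2` sending `i ↦ 0`, `j ↦ 1` shows that `F` identifies the two coordinate
projections `R^2 → R`, which are distinct because `1 ≠ 0` in `R`.
-/

open CategoryTheory

/-- The category of finitely generated free left `R`-modules, as the full
subcategory of `ModuleCat R` on modules isomorphic to some `R^n`. -/
abbrev FreeModCat (R : Type) [Ring R] :=
  CategoryTheory.ObjectProperty.FullSubcategory
    (fun M : ModuleCat.{0} R => ∃ n : ℕ, Nonempty (M ≃ₗ[R] (Fin n → R)))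

namespace FreeModCat

def piFin (R : Type) [Ring R] (k : ℕ) : FreeModCat R :=
  ⟨ModuleCat.of R (Fin k → R), k, ⟨LinearEquiv.refl R _⟩⟩

variable {R : Type} [Ring R]

def funLeft {a b : ℕ} (u : Fin a → Fin b) : piFin R b ⟶ piFin R a :=
  InducedCategory.homMk (ModuleCat.ofHom (LinearMap.funLeft R R u))

lemma funLeft_comp {a b c : ℕ} (u : Fin a → Fin b) (v : Fin b → Fin c) :
    funLeft (R := R) (v ∘ u) = funLeft v ≫ funLeft u :=
  InducedCategory.hom_ext (ModuleCat.hom_ext (LinearMap.funLeft_comp R R v u))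

lemma funLeft_injective [Nontrivial R] {a b : ℕ} :
    Function.Injective (funLeft (R := R) : (Fin a → Fin b) → (piFin R b ⟶ piFin R a)) := by
  intro u v huv
  funext x
  have hlin : LinearMap.funLeft R R u = LinearMap.funLeft R R v :=
    congrArg (fun φ => φ.hom.hom) huv
  have hx := congrFun (LinearMap.congr_fun hlin (Pi.single (u x) 1)) x
  by_contra hne
  simp [LinearMap.funLeft_apply, Ne.symm hne] at hx

end FreeModCat

lemma FinCategory.exists_card_hom_le (D : Type) [SmallCategory D] [FinCategory D] :
    ∃ B : ℕ, ∀ X Y : D, Fintype.card (X ⟶ Y) ≤ B := by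
  have : Fintype D := FinCategory.fintypeObj
  exact ⟨Finset.univ.sup fun XY : D × D => Fintype.card (XY.1 ⟶ XY.2),
    fun X Y => Finset.le_sup (f := fun XY : D × D => Fintype.card (XY.1 ⟶ XY.2))
      (Finset.mem_univ (X, Y))⟩

lemma not_residuallyFiniteCat_of_large_families {C : Type*} [Category C] {X Y : C} {f g : X ⟶ Y}
    (hfg : f ≠ g)
    (h : ∀ n : ℕ, ∃ (Z : C) (e : Fin n → (Z ⟶ Y)),
      ∀ i j, i ≠ j → ∃ p : X ⟶ Z, p ≫ e i = f ∧ p ≫ e j = g) :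
    ¬ ResiduallyFiniteCat C := by
  intro hC
  obtain ⟨D, _, _, F, hF⟩ := hC f g hfg
  obtain ⟨B, hB⟩ := FinCategory.exists_card_hom_le D
  obtain ⟨Z, e, he⟩ := h (B + 1)
  have hcard : Fintype.card (F.obj Z ⟶ F.obj Y) < Fintype.card (Fin (B + 1)) := by
    simpa [Fintype.card_fin] using Nat.lt_succ_of_le (hB (F.obj Z) (F.obj Y))
  obtain ⟨i, j, hij, hFe⟩ := Fintype.exists_ne_map_eq_of_card_lt (fun i => F.map (e i)) hcard
  obtain ⟨p, hpi, hpj⟩ := he i j hij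
  apply hF
  rw [← hpi, ← hpj, F.map_comp, F.map_comp, hFe]

/-- For every ring with unit, the category of finitely generated free left
modules is not residually finite. -/
theorem freeModCat_not_residuallyFinite (R : Type) [Ring R] [Nontrivial R] :
    ¬ ResiduallyFiniteCat (FreeModCat R) := by
  refine not_residuallyFiniteCat_of_large_families
    (X := FreeModCat.piFin R 2) (f := FreeModCat.funLeft fun _ : Fin 1 => 0)
    (g := FreeModCat.funLeft fun _ : Fin 1 => 1)
    (fun h => absurd (congrFun (FreeModCat.funLeft_injective h) 0) (by decide))
    fun n => ⟨FreeModCat.piFin R n, fun i => FreeModCat.funLeft fun _ : Fin 1 => i,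
      fun i j hij => ⟨FreeModCat.funLeft fun x => if x = i then 0 else 1, ?_, ?_⟩⟩
  all_goals
    rw [← FreeModCat.funLeft_comp]
    congr 1
    funext
    simp [Ne.symm hij]
end
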